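/- For integers n ≥ 2, the coefficient [z^n] of the series F_r^≤(z) = z/(1 - z·(1-T^{2r})/(1-T^2)), where T = z + T^2 with T(0)=0, is nonnegative and weakly increasing in r, and for r ≥ ⌊n/2⌋ it equals C_{n-2}. -/

import Mathlib

/-!
`T = X·C` for the Catalan series `C = 1 + X·C²`, so `T` has nonnegative coefficients.
Comparing the defining equations of consecutive `F r` gives
`F (r + 1) - F r = T^{2r} · F r · F (r + 1)`; starting from `F 0 = X`, this yields nonnegativity
(by induction on `r`) and monotonicity. Finally `F r ≡ X·(1 + T) mod X^{2r+2}`, and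
`[X^n] X·(1 + T) = [X^{n-1}] T = C_{n-2}` for `n ≥ 2`.
-/

open PowerSeries

namespace PowerSeries

variable {R : Type*}

section NonnegCoeffs

variable [Semiring R] [PartialOrder R] [IsOrderedRing R]

variable (R) in
def nonnegCoeffs : Subsemiring R⟦X⟧ where
  carrier := {f | ∀ n, 0 ≤ coeff n f}
  mul_mem' {f g} hf hg n := by
    rw [coeff_mul]
    exact Finset.sum_nonneg fun p _ => mul_nonneg (hf p.1) (hg p.2)
  one_mem' n := by
    rw [coeff_one]
    split_ifs <;> simp
  add_mem' {f g} hf hg n := by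
    rw [map_add]
    exact add_nonneg (hf n) (hg n)
  zero_mem' n := by simp

theorem X_mem_nonnegCoeffs : X ∈ nonnegCoeffs R := fun n => by
  rw [coeff_X]
  split_ifs <;> simp

/-- Since `h` has no constant term, `[X^n] (h * f)` only involves `[X^m] f` for `m < n`. -/
theorem mem_nonnegCoeffs_of_eq_add_mul {f g h : R⟦X⟧} (hg : g ∈ nonnegCoeffs R)
    (hh : h ∈ nonnegCoeffs R) (hh0 : constantCoeff h = 0) (hf : f = g + h * f) :
    f ∈ nonnegCoeffs R := by
  intro n
  induction n using Nat.strong_induction_on with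
  | _ n ih =>
    rw [hf, map_add, coeff_mul]
    refine add_nonneg (hg n) (Finset.sum_nonneg fun ⟨i, j⟩ hij => ?_)
    rw [Finset.HasAntidiagonal.mem_antidiagonal] at hij
    rcases Nat.eq_zero_or_pos i with rfl | hi
    · simp [hh0]
    · exact mul_nonneg (hh i) (ih j (by omega))

end NonnegCoeffs

theorem coeff_eq_catalan_of_eq_one_add_X_mul_sq [Semiring R] {B : R⟦X⟧}
    (hB : B = 1 + X * B ^ 2) (n : ℕ) : coeff n B = catalan n := by
  induction n using Nat.strong_induction_on with
  | _ n ih =>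
    rw [hB]
    cases n with
    | zero => simp
    | succ n =>
      rw [map_add, coeff_one, if_neg n.succ_ne_zero, zero_add, coeff_succ_X_mul, sq, coeff_mul,
        catalan_succ', Nat.cast_sum]
      refine Finset.sum_congr rfl fun ⟨i, j⟩ hij => ?_
      rw [Finset.HasAntidiagonal.mem_antidiagonal] at hij
      rw [ih i (by omega), ih j (by omega), Nat.cast_mul]

theorem coeff_succ_eq_catalan_of_eq_X_add_sq [CommSemiring R] {T : R⟦X⟧}
    (hT0 : constantCoeff T = 0) (hT : T = X + T ^ 2) (n : ℕ) :
    coeff (n + 1) T = catalan n := by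
  obtain ⟨B, rfl⟩ := X_dvd_iff.mpr hT0
  rw [coeff_succ_X_mul]
  exact coeff_eq_catalan_of_eq_one_add_X_mul_sq (X_mul_cancel (hT.trans (by ring))) n

end PowerSeries

namespace CatalanStanley

variable {R : Type*}

/-- `F_r^≤ = X (1 - T²) / denom T r`. -/
noncomputable def denom [CommRing R] (T : R⟦X⟧) (r : ℕ) : R⟦X⟧ := (1 - T ^ 2) - X * (1 - T ^ (2 * r))

section Algebra

variable [CommRing R] {T : R⟦X⟧} {F : ℕ → R⟦X⟧}

theorem isUnit_denom (hT0 : constantCoeff T = 0) (r : ℕ) : IsUnit (denom T r) :=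
  isUnit_iff_constantCoeff.mpr (by simp [denom, hT0])

theorem constantCoeff_eq_zero {G : R⟦X⟧} {r : ℕ} (hT0 : constantCoeff T = 0)
    (hG : G * denom T r = X * (1 - T ^ 2)) : constantCoeff G = 0 := by
  simpa [denom, hT0] using congrArg constantCoeff hG

theorem eq_X_of_mul_denom_zero {G : R⟦X⟧} (hT0 : constantCoeff T = 0)
    (hG : G * denom T 0 = X * (1 - T ^ 2)) : G = X :=
  (isUnit_denom hT0 0).mul_right_cancel (hG.trans (by simp [denom]))

theorem succ_sub (hT0 : constantCoeff T = 0) (hF : ∀ r, F r * denom T r = X * (1 - T ^ 2))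
    (r : ℕ) : F (r + 1) - F r = T ^ (2 * r) * (F r * F (r + 1)) := by
  refine (isUnit_denom hT0 (r + 1)).mul_right_cancel ?_
  have h₀ := hF r
  have h₁ := hF (r + 1)
  unfold denom at h₀ h₁ ⊢
  linear_combination (1 - T ^ (2 * r) * F r) * h₁ - h₀

/-- Since `T² = T - X`, `denom T r = (1 - T) + X T^{2r}`; the series `X (1 + T)` solves the
equation with the term `X T^{2r}` dropped. -/
theorem X_pow_dvd_sub {G : R⟦X⟧} {r : ℕ} (hT0 : constantCoeff T = 0) (hT : T = X + T ^ 2)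
    (hG : G * denom T r = X * (1 - T ^ 2)) : X ^ (2 * r + 2) ∣ G - X * (1 + T) := by
  have hdiff : (G - X * (1 + T)) * denom T r = -(X ^ 2 * T ^ (2 * r) * (1 + T)) := by
    unfold denom at hG ⊢
    linear_combination hG - X * (1 + T) * hT
  have hdvd : X ^ (2 * r + 2) ∣ X ^ 2 * T ^ (2 * r) * (1 + T) := by
    rw [pow_add, mul_comm (X ^ (2 * r))]
    exact (mul_dvd_mul_left _ (pow_dvd_pow_of_dvd (X_dvd_iff.mpr hT0) _)).mul_right _
  rw [← (isUnit_denom hT0 r).dvd_mul_right, hdiff]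
  exact hdvd.neg_right

theorem coeff_eq_coeff_X_mul_one_add {G : R⟦X⟧} {r n : ℕ} (hT0 : constantCoeff T = 0)
    (hT : T = X + T ^ 2) (hG : G * denom T r = X * (1 - T ^ 2)) (hn : n < 2 * r + 2) :
    coeff n G = coeff n (X * (1 + T)) :=
  sub_eq_zero.mp (by rw [← map_sub]; exact X_pow_dvd_iff.mp (X_pow_dvd_sub hT0 hT hG) n hn)

end Algebra

section Nonneg

variable [CommRing R] [PartialOrder R] [IsOrderedRing R] {T : R⟦X⟧} {F : ℕ → R⟦X⟧}

theorem mem_nonnegCoeffs (hT0 : constantCoeff T = 0) (hT : T ∈ nonnegCoeffs R)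
    (hF : ∀ r, F r * denom T r = X * (1 - T ^ 2)) : ∀ r, F r ∈ nonnegCoeffs R
  | 0 => eq_X_of_mul_denom_zero hT0 (hF 0) ▸ X_mem_nonnegCoeffs
  | r + 1 => by
    have hr := mem_nonnegCoeffs hT0 hT hF r
    refine mem_nonnegCoeffs_of_eq_add_mul hr (mul_mem (pow_mem hT (2 * r)) hr) ?_ ?_
    · rw [map_mul, constantCoeff_eq_zero hT0 (hF r), mul_zero]
    · linear_combination succ_sub hT0 hF r

theorem coeff_le_coeff_succ (hT0 : constantCoeff T = 0) (hT : T ∈ nonnegCoeffs R)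
    (hF : ∀ r, F r * denom T r = X * (1 - T ^ 2)) (n r : ℕ) :
    coeff n (F r) ≤ coeff n (F (r + 1)) := by
  rw [← sub_nonneg, ← map_sub, succ_sub hT0 hF]
  have hF' := mem_nonnegCoeffs hT0 hT hF
  exact mul_mem (pow_mem hT _) (mul_mem (hF' r) (hF' (r + 1))) n

end Nonneg

end CatalanStanley

open CatalanStanley

/-- For `n ≥ 2`, the coefficient `[z^n]` of the series
`F_r^≤(z) = z/(1 - z·(1-T^{2r})/(1-T^2))` (characterized with denominators
cleared by `F r·((1-T^2) - z·(1-T^{2r})) = z·(1-T^2)`), where `T = z + T^2`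
with `T(0) = 0`, is nonnegative, weakly increasing in `r`, and equals the
Catalan number `C_{n-2}` for `r ≥ ⌊n/2⌋`. -/
theorem catalan_stanley_stmt17 (n : ℕ) (hn : 2 ≤ n) (T : PowerSeries ℚ)
    (hT0 : constantCoeff T = 0) (hT : T = X + T ^ 2)
    (F : ℕ → PowerSeries ℚ)
    (hF : ∀ r : ℕ, F r * ((1 - T ^ 2) - X * (1 - T ^ (2 * r))) = X * (1 - T ^ 2)) :
    (∀ r : ℕ, 0 ≤ coeff n (F r)) ∧
    (∀ r : ℕ, coeff n (F r) ≤ coeff n (F (r + 1))) ∧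
    (∀ r : ℕ, n / 2 ≤ r → coeff n (F r) = (catalan (n - 2) : ℚ)) := by
  have hTcoeff := coeff_succ_eq_catalan_of_eq_X_add_sq hT0 hT
  have hTnonneg : T ∈ nonnegCoeffs ℚ
    | 0 => by simp [hT0]
    | m + 1 => by rw [hTcoeff]; positivity
  refine ⟨fun r => mem_nonnegCoeffs hT0 hTnonneg hF r n, coeff_le_coeff_succ hT0 hTnonneg hF n,
    fun r hr => ?_⟩
  obtain ⟨m, rfl⟩ := Nat.exists_eq_add_of_le' hn
  rw [coeff_eq_coeff_X_mul_one_add hT0 hT (hF r) (by omega), coeff_succ_X_mul, map_add,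
    coeff_one, if_neg m.succ_ne_zero, zero_add, hTcoeff, Nat.add_sub_cancel]
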